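/- The model kernel satisfies the semigroup/idempotent property: ∫_{ℝ^{2n}} 𝒫(Z,Z'') 𝒫(Z'',Z') dZ'' = 𝒫(Z,Z') for all Z, Z' ∈ ℝ^{2n}. -/

import Mathlib

/-!
The kernel factors over the coordinates, `Pker n z z' = ∏ i, Pker₁ (z i) (z' i)`, so by Fubini
the integral over `ℂⁿ` is a product of one-variable integrals. In one variable,
`Pker₁ a u * Pker₁ u b` is `exp (-π/2 (|a|² + |b|²))` times the Gaussian
`exp (-π |u|² + π a ū + π b̄ u)`, and splitting `u` into real and imaginary parts gives
`∫ exp (-c |u|² + α ū + β u) du = (π / c) exp (α β / c)`; with `c = π` this is `exp (π a b̄)`.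
-/

open MeasureTheory Complex

/-- The model Bergman kernel on `ℂⁿ × ℂⁿ`. -/
noncomputable def Pker (n : ℕ) (z z' : Fin n → ℂ) : ℂ :=
  Complex.exp (-(Real.pi : ℂ)/2 *
    ∑ i, ((‖z i‖ : ℂ)^2 + (‖z' i‖ : ℂ)^2 - 2 * z i * (starRingEnd ℂ) (z' i)))

open scoped Real ComplexConjugate

theorem integral_cexp_neg_mul_sq_norm_add_mul_conj_add_mul {c : ℂ} (hc : 0 < c.re) (α β : ℂ) :
    ∫ u : ℂ, exp (-c * (‖u‖ : ℂ) ^ 2 + α * conj u + β * u) = π / c * exp (α * β / c) := by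
  have hc₀ : c ≠ 0 := by rintro rfl; simp at hc
  have hc' : (-c).re < 0 := by simpa using hc
  have split (p : ℝ × ℝ) :
      exp (-c * (‖measurableEquivRealProd.symm p‖ : ℂ) ^ 2 + α * conj (measurableEquivRealProd.symm p)
          + β * measurableEquivRealProd.symm p) =
        exp (-c * (p.1 : ℂ) ^ 2 + (α + β) * p.1 + 0) *
          exp (-c * (p.2 : ℂ) ^ 2 + I * (β - α) * p.2 + 0) := by
    set u := measurableEquivRealProd.symm p
    have hu : u = p.1 + p.2 * I := mk_eq_add_mul_I p.1 p.2
    have hconj : conj u = p.1 - p.2 * I := by simp [hu, sub_eq_add_neg]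
    have hnorm : (‖u‖ : ℂ) ^ 2 = (p.1 : ℂ) ^ 2 + (p.2 : ℂ) ^ 2 := by
      exact_mod_cast (by rw [hu, Complex.sq_norm, normSq_add_mul_I] : ‖u‖ ^ 2 = p.1 ^ 2 + p.2 ^ 2)
    rw [← Complex.exp_add]
    congr 1
    linear_combination -c * hnorm + α * hconj + β * hu
  rw [← (volume_preserving_equiv_real_prod.symm).integral_comp
    measurableEquivRealProd.symm.measurableEmbedding]
  simp_rw [split]
  rw [Measure.volume_eq_prod, integral_prod_mul (fun x : ℝ => exp (-c * (x : ℂ) ^ 2 + (α + β) * x + 0))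
    (fun y : ℝ => exp (-c * (y : ℂ) ^ 2 + I * (β - α) * y + 0)),
    integral_cexp_quadratic hc', integral_cexp_quadratic hc', neg_neg, mul_mul_mul_comm,
    ← sq, one_div, cpow_ofNat_inv_pow, ← Complex.exp_add]
  congr 2
  rw [mul_pow, I_sq]
  field_simp
  ring

noncomputable def Pker₁ (a b : ℂ) : ℂ :=
  exp (-(π : ℂ) / 2 * ((‖a‖ : ℂ) ^ 2 + (‖b‖ : ℂ) ^ 2 - 2 * a * conj b))

theorem Pker_eq_prod (n : ℕ) (z z' : Fin n → ℂ) : Pker n z z' = ∏ i, Pker₁ (z i) (z' i) := by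
  rw [Pker, Finset.mul_sum, Complex.exp_sum]
  rfl

theorem Pker₁_mul_Pker₁ (a b u : ℂ) :
    Pker₁ a u * Pker₁ u b = exp (-(π : ℂ) / 2 * ((‖a‖ : ℂ) ^ 2 + (‖b‖ : ℂ) ^ 2)) *
      exp (-π * (‖u‖ : ℂ) ^ 2 + π * a * conj u + π * conj b * u) := by
  simp only [Pker₁, ← Complex.exp_add]
  congr 1
  ring

theorem integral_Pker₁_mul_Pker₁ (a b : ℂ) : ∫ u, Pker₁ a u * Pker₁ u b = Pker₁ a b := by
  have hπ : (π : ℂ) ≠ 0 := ofReal_ne_zero.mpr Real.pi_ne_zero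
  simp_rw [Pker₁_mul_Pker₁, integral_const_mul,
    integral_cexp_neg_mul_sq_norm_add_mul_conj_add_mul (c := π) (by simp [Real.pi_pos]),
    div_self hπ, one_mul, Pker₁, ← Complex.exp_add]
  congr 1
  field_simp
  ring

/-- Idempotent (reproducing) property of the model kernel:
`∫ 𝒫(Z,Z'') 𝒫(Z'',Z') dZ'' = 𝒫(Z,Z')`. -/
theorem Pker_idempotent (n : ℕ) (z z' : Fin n → ℂ) :
    ∫ w : Fin n → ℂ, Pker n z w * Pker n w z' = Pker n z z' := by
  simp_rw [Pker_eq_prod, ← Finset.prod_mul_distrib]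
  rw [volume_pi, integral_fintype_prod_eq_prod (fun i u => Pker₁ (z i) u * Pker₁ u (z' i))]
  simp_rw [integral_Pker₁_mul_Pker₁]
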